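/- arXiv:1106.1137 — 2 statements merged into one kernel-verified Lean document; each statement's English description precedes it below -/
import Mathlib

section
/- Suppose the nodes ξ_1,…,ξ_n are pairwise distinct and a_{i,l_i−1} ≠ 0 for all i, and set C₁ = ‖U(ξ_1,l_1+1,…,ξ_n,l_n+1)^{−1}‖_∞. Then for every ε > 0, every vector v ∈ ℂ^R with |v_k| ≤ ε for all k, every i = 1,…,n and every 1 ≤ j ≤ l_i−1, the component of J_P(x)^{−1} v corresponding to the magnitude a_{i,j} satisfies |[J_P(x)^{−1} v]_{a_{i,j}}| ≤ C₁ ε (1 + |a_{i,j−1}| / |a_{i,l_i−1}|). -/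
open scoped BigOperators

noncomputable section

/-- Offset of the `i`-th block of columns: the sum of the multiplicities of all previous blocks. -/
def blockOff {n : ℕ} (L : Fin n → ℕ) (i : Fin n) : ℕ := ∑ i' ∈ Finset.Iio i, L i'

theorem blockOff_add_lt {n : ℕ} (L : Fin n → ℕ) (i : Fin n) {j : ℕ} (hj : j < L i) :
    blockOff L i + j < ∑ i', L i' := by
  have h1 : ∑ i' ∈ insert i (Finset.Iio i), L i' = ∑ i' ∈ Finset.Iio i, L i' + L i := by
    rw [Finset.sum_insert (by simp)]; ring
  have h2 : ∑ i' ∈ insert i (Finset.Iio i), L i' ≤ ∑ i', L i' :=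
    Finset.sum_le_sum_of_subset (Finset.subset_univ _)
  unfold blockOff
  omega

/-- The flattened index of position `j` inside block `i`, when block `i` has size `L i`. -/
def encC {n : ℕ} (L : Fin n → ℕ) (i : Fin n) (j : Fin (L i)) : Fin (∑ i', L i') :=
  ⟨blockOff L i + j, blockOff_add_lt L i j.isLt⟩

/-- The (square) confluent Vandermonde matrix on nodes `ξ_i` with multiplicities `L i`:
rows are indexed by `k = 0,…,(∑ L i)−1`; the entry in row `k` and column `j` of block `i`
is `(k)_j ξ_i^{k−j}` (zero when `j > k`). -/
def confVand {n : ℕ} (L : Fin n → ℕ) (ξ : Fin n → ℂ) :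
    Matrix (Fin (∑ i, L i)) (Fin (∑ i, L i)) ℂ :=
  fun k c => ∑ i, ∑ j : Fin (L i),
    if c = encC L i j then ((k : ℕ).descFactorial j : ℂ) * ξ i ^ ((k : ℕ) - (j : ℕ)) else 0

/-- The index (in the parameter vector) of the magnitude `a_{i,j}` (`j < l i`) or,
for `j = l i`, of the node `ξ_i`; the parameters are ordered
`(a_{1,0},…,a_{1,l_1−1}, ξ_1, …, a_{n,0},…,a_{n,l_n−1}, ξ_n)`. -/
def encP {n : ℕ} (l : Fin n → ℕ) (i : Fin n) (j : Fin (l i + 1)) :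
    Fin (∑ i', (l i' + 1)) :=
  encC (fun i' => l i' + 1) i j

/-- The parameter vector `x = (a_{1,0},…,a_{1,l_1−1}, ξ_1, …, a_{n,0},…,a_{n,l_n−1}, ξ_n)`. -/
def pronyParam {n : ℕ} (l : Fin n → ℕ) (ξ : Fin n → ℂ)
    (a : (i : Fin n) → Fin (l i) → ℂ) : Fin (∑ i', (l i' + 1)) → ℂ :=
  fun p => ∑ i, ∑ j : Fin (l i + 1),
    if p = encP l i j then (if h : (j : ℕ) < l i then a i ⟨j, h⟩ else ξ i) else 0

/-- The Prony map `P : ℂ^R → ℂ^R` sending the parameter vector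
`x = (a_{1,0},…,a_{1,l_1−1}, ξ_1, …, a_{n,0},…,a_{n,l_n−1}, ξ_n)` to the moment vector
`(m_0,…,m_{R−1})`, `m_k = Σ_i Σ_{j<l_i} a_{i,j} (k)_j ξ_i^{k−j}`. -/
def pronyMap {n : ℕ} (l : Fin n → ℕ) (x : Fin (∑ i', (l i' + 1)) → ℂ) :
    Fin (∑ i', (l i' + 1)) → ℂ :=
  fun k => ∑ i, ∑ j : Fin (l i),
    x (encP l i (Fin.castSucc j)) * ((k : ℕ).descFactorial j : ℂ) *
      (x (encP l i (Fin.last (l i)))) ^ ((k : ℕ) - (j : ℕ))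

/-- The Jacobian matrix of the Prony map at `x`: the `(k,p)` entry is the partial
derivative of the `k`-th moment with respect to the `p`-th parameter. -/
def pronyJacobian {n : ℕ} (l : Fin n → ℕ) (x : Fin (∑ i', (l i' + 1)) → ℂ) :
    Matrix (Fin (∑ i', (l i' + 1))) (Fin (∑ i', (l i' + 1))) ℂ :=
  fun k p => deriv (fun t : ℂ => pronyMap l (Function.update x p t) k) (x p)

/-!
The Jacobian factors as `J_P(x) = U * T`, where `U` is the confluent Vandermonde matrix with
multiplicities `l_i + 1` and `T = pronyMagnitudeMatrix l a` is block diagonal, its `i`-th block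
being the identity with the `ξ_i`-column replaced by `(0, a_{i,0}, …, a_{i,l_i-1})`: indeed
`∂/∂ξ_i (a_{i,j} (k)_j ξ_i^{k-j}) = a_{i,j} (k)_{j+1} ξ_i^{k-j-1}`. Hence `y = J_P(x)⁻¹ v` solves
`T y = w` with `w = U⁻¹ v`, whose entries are bounded by `C₁ ε`, and the block structure of `T`
gives `y_{a_{i,j}} = w_{a_{i,j}} - (a_{i,j-1} / a_{i,l_i-1}) w_{ξ_i}`. When `J_P(x)` is singular
its inverse is `0` in Mathlib and the bound is trivial.
-/

open scoped Matrix

theorem Fintype.sum_sum_ite_eq_of_injective {ι β M : Type*} {κ : ι → Type*} [Fintype ι]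
    [∀ i, Fintype (κ i)] [DecidableEq β] [AddCommMonoid M] (F : ∀ i, κ i → β)
    (hF : Function.Injective fun s : Σ i, κ i => F s.1 s.2) (f : ∀ i, κ i → M)
    (i₀ : ι) (j₀ : κ i₀) :
    ∑ i, ∑ j, (if F i₀ j₀ = F i j then f i j else 0) = f i₀ j₀ := by
  classical
  rw [← Fintype.sum_sigma (fun s => if F i₀ j₀ = F s.1 s.2 then f s.1 s.2 else 0)]
  have hF' (s : Σ i, κ i) : F i₀ j₀ = F s.1 s.2 ↔ ⟨i₀, j₀⟩ = s :=
    hF.eq_iff (a := ⟨i₀, j₀⟩)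
  simp_rw [hF']
  exact Fintype.sum_ite_eq _ _

theorem hasDerivAt_update_mul_update_pow {ι : Type*} [DecidableEq ι] (x : ι → ℂ) (p q r : ι)
    (c : ℂ) (m : ℕ) :
    HasDerivAt (fun t => Function.update x p t q * c * Function.update x p t r ^ m)
      ((if p = q then c * x r ^ m else 0) +
        (if p = r then x q * c * (m * x r ^ (m - 1)) else 0)) (x p) := by
  have hcoord (s : ι) : HasDerivAt (fun t => Function.update x p t s)
      (if p = s then 1 else 0) (x p) := by
    simpa [Pi.single_apply, eq_comm (a := s)] using
      hasDerivAt_pi.mp (hasDerivAt_update x p (x p)) s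
  refine (((hcoord q).mul_const c).fun_mul ((hcoord r).fun_pow m)).congr_deriv ?_
  simp only [Function.update_eq_self]
  split_ifs <;> ring

theorem Matrix.one_updateCol_mulVec {m α : Type*} [Fintype m] [DecidableEq m] [CommSemiring α]
    (j : m) (c z : m → α) :
    (1 : Matrix m m α).updateCol j c *ᵥ z = Function.update z j 0 + z j • c := by
  ext i
  have hsplit (x : m) : (1 : Matrix m m α).updateCol j c i x * z x =
      (if x = j then c i * z j else 0) + (1 : Matrix m m α) i x * Function.update z j 0 x := by
    rcases eq_or_ne x j with rfl | hx <;> simp [*]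
  simp only [Matrix.mulVec, dotProduct, hsplit, Finset.sum_add_distrib, Fintype.sum_ite_eq']
  simp [Matrix.one_apply, mul_comm, add_comm]

theorem Matrix.reindex_blockDiagonal'_mulVec_apply {ι ν α : Type*} {κ : ι → Type*} [Fintype ι]
    [DecidableEq ι] [∀ i, Fintype (κ i)] [Fintype ν] [NonUnitalNonAssocSemiring α]
    (e : (Σ i, κ i) ≃ ν) (B : ∀ i, Matrix (κ i) (κ i) α) (y : ν → α) (i : ι) (j : κ i) :
    (Matrix.reindex e e (Matrix.blockDiagonal' B) *ᵥ y) (e ⟨i, j⟩) =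
      (B i *ᵥ fun j' => y (e ⟨i, j'⟩)) j := by
  rw [Matrix.reindex_apply, Matrix.submatrix_mulVec_equiv]
  simp only [Function.comp_apply, Equiv.symm_apply_apply, Equiv.symm_symm, Matrix.mulVec,
    dotProduct, Fintype.sum_sigma]
  rw [Fintype.sum_eq_single i fun i' hi' => by simp [Matrix.blockDiagonal'_apply_ne _ _ _ hi'.symm]]
  simp

theorem Matrix.mul_reindex_blockDiagonal'_apply {ι μ ν α : Type*} {κ : ι → Type*} [Fintype ι]
    [DecidableEq ι] [∀ i, Fintype (κ i)] [Fintype ν] [NonUnitalNonAssocSemiring α]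
    (A : Matrix μ ν α) (e : (Σ i, κ i) ≃ ν) (B : ∀ i, Matrix (κ i) (κ i) α) (k : μ) (i : ι)
    (j : κ i) :
    (A * Matrix.reindex e e (Matrix.blockDiagonal' B)) k (e ⟨i, j⟩) =
      (A.submatrix id (fun j' => e ⟨i, j'⟩) * B i) k j := by
  rw [Matrix.mul_apply, ← e.sum_comp, Fintype.sum_sigma,
    Fintype.sum_eq_single i fun i' hi' => by simp [Matrix.blockDiagonal'_apply_ne _ _ _ hi']]
  simp [Matrix.mul_apply]

theorem Matrix.mulVec_mul_inv_mulVec {n K : Type*} [Fintype n] [DecidableEq n] [CommRing K]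
    {A B : Matrix n n K} (h : IsUnit (A * B).det) (v : n → K) :
    B *ᵥ ((A * B)⁻¹ *ᵥ v) = A⁻¹ *ᵥ v := by
  have hB : IsUnit B.det := isUnit_of_mul_isUnit_right (Matrix.det_mul A B ▸ h)
  rw [Matrix.mul_inv_rev, Matrix.mulVec_mulVec, ← Matrix.mul_assoc, Matrix.mul_nonsing_inv _ hB,
    Matrix.one_mul]

theorem Matrix.norm_mulVec_apply_le {m n α : Type*} [Fintype n] [SeminormedRing α]
    (A : Matrix m n α) {v : n → α} {ε : ℝ} (hv : ∀ c, ‖v c‖ ≤ ε) (r : m) :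
    ‖(A *ᵥ v) r‖ ≤ (∑ c, ‖A r c‖) * ε :=
  calc ‖(A *ᵥ v) r‖ ≤ ∑ c, ‖A r c * v c‖ := norm_sum_le _ _
    _ ≤ ∑ c, ‖A r c‖ * ε := Finset.sum_le_sum fun c _ =>
        (norm_mul_le _ _).trans (mul_le_mul_of_nonneg_left (hv c) (norm_nonneg _))
    _ = (∑ c, ‖A r c‖) * ε := (Finset.sum_mul _ _ _).symm

theorem encC_eq_finSigmaFinEquiv {n : ℕ} (L : Fin n → ℕ) (i : Fin n) (j : Fin (L i)) :
    encC L i j = finSigmaFinEquiv ⟨i, j⟩ := by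
  ext
  simp only [finSigmaFinEquiv_apply, encC, blockOff]
  congr 1
  refine ((Finset.sum_map Finset.univ (Fin.castLEEmb i.2.le) L).symm.trans ?_).symm
  congr 1
  ext k
  simp only [Finset.mem_map, Finset.mem_univ, true_and, Finset.mem_Iio, Fin.castLEEmb_apply]
  exact ⟨fun ⟨m, hm⟩ => hm ▸ m.2, fun hk => ⟨⟨k, hk⟩, rfl⟩⟩

theorem confVand_apply_finSigmaFinEquiv {n : ℕ} (L : Fin n → ℕ) (ξ : Fin n → ℂ)
    (k : Fin (∑ i, L i)) (i : Fin n) (j : Fin (L i)) :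
    confVand L ξ k (finSigmaFinEquiv ⟨i, j⟩) =
      ((k : ℕ).descFactorial j : ℂ) * ξ i ^ ((k : ℕ) - (j : ℕ)) := by
  rw [← encC_eq_finSigmaFinEquiv]
  refine Fintype.sum_sum_ite_eq_of_injective (encC L) ?_ _ i j
  simpa only [encC_eq_finSigmaFinEquiv] using finSigmaFinEquiv.injective

section

variable {n : ℕ} (l : Fin n → ℕ) (ξ : Fin n → ℂ) (a : (i : Fin n) → Fin (l i) → ℂ)

theorem encP_eq_finSigmaFinEquiv (i : Fin n) (j : Fin (l i + 1)) :
    encP l i j = finSigmaFinEquiv ⟨i, j⟩ :=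
  encC_eq_finSigmaFinEquiv (fun i => l i + 1) i j

theorem encP_castSucc_injective :
    Function.Injective fun s : Σ i, Fin (l i) => encP l s.1 s.2.castSucc := by
  rintro ⟨i, j⟩ ⟨i', j'⟩ h
  simp only [encP_eq_finSigmaFinEquiv, finSigmaFinEquiv.injective.eq_iff, Sigma.mk.inj_iff] at h
  obtain ⟨rfl, h⟩ := h
  rw [Fin.castSucc_inj.mp (eq_of_heq h)]

theorem encP_last_injective :
    Function.Injective fun i => encP l i (Fin.last (l i)) := fun i i' h => by
  simp only [encP_eq_finSigmaFinEquiv, finSigmaFinEquiv.injective.eq_iff, Sigma.mk.inj_iff] at h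
  exact h.1

theorem encP_castSucc_ne_encP_last (i i' : Fin n) (j : Fin (l i)) :
    encP l i j.castSucc ≠ encP l i' (Fin.last _) := by
  rw [encP_eq_finSigmaFinEquiv, encP_eq_finSigmaFinEquiv, finSigmaFinEquiv.injective.ne_iff]
  intro h
  obtain ⟨rfl, h⟩ := Sigma.mk.inj_iff.mp h
  exact Fin.castSucc_ne_last j (eq_of_heq h)

theorem pronyParam_apply_encP (i : Fin n) (j : Fin (l i + 1)) :
    pronyParam l ξ a (encP l i j) = if h : (j : ℕ) < l i then a i ⟨j, h⟩ else ξ i := by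
  refine Fintype.sum_sum_ite_eq_of_injective (encP l) ?_ _ i j
  simpa only [encP_eq_finSigmaFinEquiv] using finSigmaFinEquiv.injective

theorem pronyParam_apply_castSucc (i : Fin n) (j : Fin (l i)) :
    pronyParam l ξ a (encP l i j.castSucc) = a i j := by
  simp [pronyParam_apply_encP]

theorem pronyParam_apply_last (i : Fin n) :
    pronyParam l ξ a (encP l i (Fin.last _)) = ξ i := by
  simp [pronyParam_apply_encP]

theorem pronyJacobian_apply (x : Fin (∑ i', (l i' + 1)) → ℂ)
    (k p : Fin (∑ i', (l i' + 1))) :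
    pronyJacobian l x k p = ∑ i, ∑ j : Fin (l i),
      ((if p = encP l i j.castSucc then
          ((k : ℕ).descFactorial j : ℂ) * x (encP l i (Fin.last _)) ^ ((k : ℕ) - j) else 0) +
        (if p = encP l i (Fin.last _) then
          x (encP l i j.castSucc) * ((k : ℕ).descFactorial j : ℂ) *
            (((k : ℕ) - j : ℕ) * x (encP l i (Fin.last _)) ^ ((k : ℕ) - j - 1)) else 0)) :=
  (HasDerivAt.fun_sum fun _ _ => HasDerivAt.fun_sum fun _ _ =>
    hasDerivAt_update_mul_update_pow x p _ _ _ _).deriv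

theorem pronyJacobian_apply_castSucc (x : Fin (∑ i', (l i' + 1)) → ℂ)
    (k : Fin (∑ i', (l i' + 1))) (i : Fin n) (j : Fin (l i)) :
    pronyJacobian l x k (encP l i j.castSucc) =
      ((k : ℕ).descFactorial j : ℂ) * x (encP l i (Fin.last _)) ^ ((k : ℕ) - j) := by
  simp only [pronyJacobian_apply, encP_castSucc_ne_encP_last, if_false, add_zero]
  exact Fintype.sum_sum_ite_eq_of_injective (fun i (j : Fin (l i)) => encP l i j.castSucc)
    (encP_castSucc_injective l) _ i j

theorem pronyJacobian_apply_last (x : Fin (∑ i', (l i' + 1)) → ℂ)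
    (k : Fin (∑ i', (l i' + 1))) (i : Fin n) :
    pronyJacobian l x k (encP l i (Fin.last _)) = ∑ j : Fin (l i),
      x (encP l i j.castSucc) * ((k : ℕ).descFactorial j : ℂ) *
        (((k : ℕ) - j : ℕ) * x (encP l i (Fin.last _)) ^ ((k : ℕ) - j - 1)) := by
  simp only [pronyJacobian_apply, (encP_castSucc_ne_encP_last l _ _ _).symm, if_false, zero_add,
    (encP_last_injective l).eq_iff]
  rw [Fintype.sum_eq_single i fun i' hi' => by simp [Ne.symm hi']]
  simp

def pronyMagnitudeMatrix :
    Matrix (Fin (∑ i', (l i' + 1))) (Fin (∑ i', (l i' + 1))) ℂ :=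
  Matrix.reindex finSigmaFinEquiv finSigmaFinEquiv <| Matrix.blockDiagonal' fun i =>
    (1 : Matrix (Fin (l i + 1)) (Fin (l i + 1)) ℂ).updateCol (Fin.last (l i)) (Fin.cons 0 (a i))

theorem pronyMagnitudeMatrix_mulVec_apply_succ (y : Fin (∑ i', (l i' + 1)) → ℂ) (i : Fin n)
    (j : Fin (l i)) :
    (pronyMagnitudeMatrix l a *ᵥ y) (encP l i j.succ) =
      Function.update (fun j' => y (encP l i j')) (Fin.last _) 0 j.succ +
        a i j * y (encP l i (Fin.last _)) := by
  simp only [pronyMagnitudeMatrix, encP_eq_finSigmaFinEquiv,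
    Matrix.reindex_blockDiagonal'_mulVec_apply, Matrix.one_updateCol_mulVec, Pi.add_apply,
    Pi.smul_apply, Fin.cons_succ, smul_eq_mul, mul_comm]

theorem pronyJacobian_eq_confVand_mul :
    pronyJacobian l (pronyParam l ξ a) =
      confVand (fun i => l i + 1) ξ * pronyMagnitudeMatrix l a := by
  ext k q
  obtain ⟨⟨i, j⟩, rfl⟩ := finSigmaFinEquiv.surjective q
  rw [pronyMagnitudeMatrix, Matrix.mul_reindex_blockDiagonal'_apply, Matrix.mul_updateCol,
    Matrix.mul_one, ← encP_eq_finSigmaFinEquiv]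
  induction j using Fin.lastCases with
  | last =>
    rw [Matrix.updateCol_self, pronyJacobian_apply_last, Matrix.mulVec, dotProduct,
      Fin.sum_univ_succ, Fin.cons_zero, mul_zero, zero_add]
    refine Finset.sum_congr rfl fun j _ => ?_
    rw [Matrix.submatrix_apply, id, confVand_apply_finSigmaFinEquiv, Fin.cons_succ,
      pronyParam_apply_castSucc, pronyParam_apply_last, Fin.val_succ, Nat.descFactorial_succ,
      Nat.sub_sub]
    push_cast
    ring
  | cast j =>
    rw [Matrix.updateCol_ne (Fin.castSucc_ne_last j), pronyJacobian_apply_castSucc,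
      pronyParam_apply_last, Matrix.submatrix_apply, id, confVand_apply_finSigmaFinEquiv,
      Fin.val_castSucc]

theorem apply_encP_eq_of_pronyMagnitudeMatrix_mulVec_eq {y w : Fin (∑ i', (l i' + 1)) → ℂ}
    (h : pronyMagnitudeMatrix l a *ᵥ y = w) (i : Fin n) (j : ℕ) (hj1 : 1 ≤ j) (hj : j < l i)
    (ha : a i ⟨l i - 1, by omega⟩ ≠ 0) :
    y (encP l i ⟨j, by omega⟩) = w (encP l i ⟨j, by omega⟩) -
      a i ⟨j - 1, by omega⟩ / a i ⟨l i - 1, by omega⟩ * w (encP l i (Fin.last _)) := by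
  have hlast : (⟨l i - 1, by omega⟩ : Fin (l i)).succ = Fin.last _ := Fin.ext (by simp; omega)
  have hsucc : (⟨j - 1, by omega⟩ : Fin (l i)).succ = ⟨j, by omega⟩ := Fin.ext (by simp; omega)
  have hnode := pronyMagnitudeMatrix_mulVec_apply_succ l a y i ⟨l i - 1, by omega⟩
  have hmag := pronyMagnitudeMatrix_mulVec_apply_succ l a y i ⟨j - 1, by omega⟩
  rw [h, hlast, Function.update_self, zero_add] at hnode
  rw [h, hsucc, Function.update_of_ne (by simp [Fin.ext_iff]; omega)] at hmag
  rw [hmag, hnode]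
  field_simp
  ring

end

/-- let `C₁ = ‖U(ξ_1,l_1+1,…,ξ_n,l_n+1)⁻¹‖_∞` (maximal row sum of absolute
values).  If the nodes are pairwise distinct and the highest magnitudes are nonzero, then
for every `ε > 0`, every `v` with `|v_k| ≤ ε` and every `1 ≤ j ≤ l_i−1`, the component of
`J_P(x)⁻¹ v` corresponding to the magnitude `a_{i,j}` has absolute value at most
`C₁ ε (1 + |a_{i,j−1}|/|a_{i,l_i−1}|)`. -/
theorem pronyJacobian_inv_magnitude_component_bound
    (n : ℕ) (l : Fin n → ℕ) (hl : ∀ i, 1 ≤ l i)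
    (ξ : Fin n → ℂ) (a : (i : Fin n) → Fin (l i) → ℂ)
    (hhigh : ∀ i, a i ⟨l i - 1, by have := hl i; omega⟩ ≠ 0)
    (C₁ : ℝ)
    (hC₁ : C₁ = ⨆ r, ∑ c, ‖((confVand (fun i => l i + 1) ξ)⁻¹) r c‖)
    (ε : ℝ) (v : Fin (∑ i', (l i' + 1)) → ℂ)
    (hv : ∀ k, ‖v k‖ ≤ ε) :
    ∀ (i : Fin n) (j : ℕ) (hj1 : 1 ≤ j) (hj2 : j ≤ l i - 1),
      ‖Matrix.mulVec (pronyJacobian l (pronyParam l ξ a))⁻¹ v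
            (encP l i ⟨j, by have := hl i; omega⟩)‖ ≤
        C₁ * ε *
          (1 + ‖a i ⟨j - 1, by have := hl i; omega⟩‖ /
            ‖a i ⟨l i - 1, by have := hl i; omega⟩‖) := by
  intro i j hj1 hj2
  rw [pronyJacobian_eq_confVand_mul]
  set U := confVand (fun i => l i + 1) ξ
  have hrow (r) : ∑ c, ‖U⁻¹ r c‖ ≤ C₁ :=
    hC₁ ▸ le_ciSup (f := fun r => ∑ c, ‖U⁻¹ r c‖) (Set.finite_range _).bddAbove r
  have hε : 0 ≤ ε := (norm_nonneg _).trans (hv (encP l i (Fin.last _)))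
  have hw (r) : ‖(U⁻¹ *ᵥ v) r‖ ≤ C₁ * ε :=
    (Matrix.norm_mulVec_apply_le _ hv r).trans (mul_le_mul_of_nonneg_right (hrow r) hε)
  by_cases hJ : IsUnit (U * pronyMagnitudeMatrix l a).det
  · rw [apply_encP_eq_of_pronyMagnitudeMatrix_mulVec_eq l a (Matrix.mulVec_mul_inv_mulVec hJ v)
      i j hj1 (by omega) (hhigh i)]
    calc _ ≤ _ := norm_sub_le _ _
      _ ≤ C₁ * ε + ‖a i ⟨j - 1, _⟩‖ / ‖a i ⟨l i - 1, _⟩‖ * (C₁ * ε) := by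
        rw [norm_mul, norm_div]
        gcongr <;> exact hw _
      _ = _ := by ring
  · have hC₁_nonneg : 0 ≤ C₁ :=
      (Finset.sum_nonneg fun _ _ => norm_nonneg _).trans (hrow (encP l i 0))
    rw [Matrix.nonsing_inv_apply_not_isUnit _ hJ, Matrix.zero_mulVec, Pi.zero_apply, norm_zero]
    positivity
end
end

section
/- The rectangular confluent Vandermonde matrix has the rotational invariance property: let V be the S×C confluent Vandermonde matrix on nodes ξ_1,…,ξ_n with multiplicities l_1,…,l_n (rows indexed by k = 0,…,S−1, S ≥ 2). Let V^↑ denote V with its first row removed and V_↓ denote V with its last row removed (both of size (S−1)×C). Then V^↑ = V_↓ · J, where J = diag(J_1,…,J_n) is the C×C block-diagonal matrix whose i-th block J_i is the l_i×l_i upper bidiagonal matrix (similar to a Jordan block) with ξ_i in every diagonal position (j,j), 0 ≤ j ≤ l_i−1, the value j in every superdiagonal position (ج−1, j) for 1 ≤ j ≤ l_i−1, and zeros elsewhere. -/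
open scoped BigOperators

noncomputable section

lemma blockOff_mono {n : ℕ} (L : Fin n → ℕ) {i i' : Fin n} (h : i < i') :
    blockOff L i + L i ≤ blockOff L i' := by
  have hsub : insert i (Finset.Iio i) ⊆ Finset.Iio i' := by
    intro x hx
    simp only [Finset.mem_insert, Finset.mem_Iio] at hx ⊢
    rcases hx with rfl | hx
    · exact h
    · exact hx.trans h
  have := Finset.sum_le_sum_of_subset (f := L) hsub
  rw [Finset.sum_insert (by simp)] at this
  unfold blockOff
  omega

lemma encC_eq_iff {n : ℕ} (L : Fin n → ℕ) (i i' : Fin n) (s : Fin (L i)) (t : Fin (L i')) :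
    encC L i s = encC L i' t ↔ i = i' ∧ (s : ℕ) = (t : ℕ) := by
  constructor
  · intro h
    have hv : blockOff L i + (s : ℕ) = blockOff L i' + (t : ℕ) := congrArg Fin.val h
    have hii : i = i' := by
      rcases lt_trichotomy i i' with hlt | heq | hlt
      · have := blockOff_mono L hlt
        have := s.isLt
        omega
      · exact heq
      · have := blockOff_mono L hlt
        have := t.isLt
        omega
    subst hii
    exact ⟨rfl, by omega⟩
  · rintro ⟨rfl, hv⟩
    have : s = t := Fin.ext hv
    subst this; rfl

/-- The rectangular `S×C` confluent Vandermonde matrix on nodes `ξ_i` with multiplicities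
`L i` (`C = ∑ L i`): rows are indexed by `k = 0,…,S−1`; the entry in row `k` and column `j`
of block `i` is `(k)_j ξ_i^{k−j}` (zero when `j > k`). -/
def confVandRect (S : ℕ) {n : ℕ} (L : Fin n → ℕ) (ξ : Fin n → ℂ) :
    Matrix (Fin S) (Fin (∑ i, L i)) ℂ :=
  fun k c => ∑ i, ∑ j : Fin (L i),
    if c = encC L i j then ((k : ℕ).descFactorial j : ℂ) * ξ i ^ ((k : ℕ) - (j : ℕ)) else 0

lemma confVandRect_apply_encC (S : ℕ) {n : ℕ} (L : Fin n → ℕ) (ξ : Fin n → ℂ)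
    (k : Fin S) (i : Fin n) (s : Fin (L i)) :
    confVandRect S L ξ k (encC L i s) =
      ((k : ℕ).descFactorial s : ℂ) * ξ i ^ ((k : ℕ) - (s : ℕ)) := by
  unfold confVandRect
  rw [Fintype.sum_eq_single i]
  · rw [Fintype.sum_eq_single s]
    · simp
    · intro t ht
      rw [if_neg]
      intro h
      rw [encC_eq_iff] at h
      exact ht (Fin.ext h.2.symm)
  · intro i' hi'
    apply Finset.sum_eq_zero
    intro t _
    rw [if_neg]
    intro h
    rw [encC_eq_iff] at h
    exact hi' h.1.symm

/-- `M` with its first row removed. -/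
def dropFirstRow {S : ℕ} {β : Type*} (M : Matrix (Fin S) β ℂ) :
    Matrix (Fin (S - 1)) β ℂ :=
  fun k c => M ⟨(k : ℕ) + 1, by have := k.isLt; omega⟩ c

/-- `M` with its last row removed. -/
def dropLastRow {S : ℕ} {β : Type*} (M : Matrix (Fin S) β ℂ) :
    Matrix (Fin (S - 1)) β ℂ :=
  fun k c => M ⟨(k : ℕ), by have := k.isLt; omega⟩ c

/-- The block-diagonal matrix `J = diag(J_1,…,J_n)`, where `J_i` is the `l_i×l_i` upper
bidiagonal matrix with `ξ_i` on the diagonal and the value `j` in superdiagonal position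
`(j−1,j)` for `1 ≤ j ≤ l_i−1`. -/
def jordanLike {n : ℕ} (L : Fin n → ℕ) (ξ : Fin n → ℂ) :
    Matrix (Fin (∑ i, L i)) (Fin (∑ i, L i)) ℂ :=
  fun r c => ∑ i, ∑ s : Fin (L i), ∑ t : Fin (L i),
    if r = encC L i s ∧ c = encC L i t then
      (if (s : ℕ) = (t : ℕ) then ξ i
      else if (s : ℕ) + 1 = (t : ℕ) then ((t : ℕ) : ℂ) else 0)
    else 0

lemma key_sum (k : ℕ) (x : ℂ) {m : ℕ} (t : Fin m) :
    ∑ s : Fin m, ((k.descFactorial s : ℂ) * x ^ (k - (s : ℕ))) *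
        (if (s : ℕ) = (t : ℕ) then x else if (s : ℕ) + 1 = (t : ℕ) then ((t : ℕ) : ℂ) else 0)
      = ((k + 1).descFactorial t : ℂ) * x ^ (k + 1 - (t : ℕ)) := by
  rcases Nat.eq_zero_or_pos (t : ℕ) with h0 | hpos
  · rw [Finset.sum_eq_single t]
    · simp [h0, pow_succ]
    · intro s _ hs
      rw [if_neg (fun h => hs (Fin.ext h)), if_neg (by omega)]
      ring
    · simp
  · obtain ⟨u, hu⟩ : ∃ u, (t : ℕ) = u + 1 := ⟨(t : ℕ) - 1, by omega⟩
    have hum : u < m := by have := t.isLt; omega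
    set t' : Fin m := ⟨u, hum⟩ with ht'
    have hvt' : (t' : ℕ) = u := rfl
    rw [← Finset.add_sum_erase _ _ (Finset.mem_univ t')]
    have htne : t ∈ Finset.univ.erase t' := by
      refine Finset.mem_erase.mpr ⟨?_, Finset.mem_univ _⟩
      intro h; rw [h] at hu; simp [ht'] at hu
    rw [Finset.sum_eq_single_of_mem t htne]
    · rw [hvt', if_neg (by omega), if_pos (by omega), if_pos rfl, hu,
        Nat.succ_descFactorial_succ, Nat.descFactorial_succ]
      rcases le_or_gt u k with hk | hk
      · rcases eq_or_lt_of_le hk with rfl | hk'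
        · rw [Nat.sub_self, show u + 1 - (u + 1) = 0 from by omega,
            show u - (u + 1) = 0 from by omega]
          push_cast
          ring
        · rw [show k - (u + 1) = k - u - 1 from by omega]
          rw [show k + 1 - (u + 1) = k - u from by omega]
          have hx : x ^ (k - u - 1) * x = x ^ (k - u) := by
            rw [← pow_succ, show k - u - 1 + 1 = k - u from by omega]
          push_cast [Nat.cast_sub hk]
          rw [mul_assoc _ _ x, hx]
          ring
      · have hz : k.descFactorial u = 0 := Nat.descFactorial_eq_zero_iff_lt.mpr hk
        simp [hz, Nat.sub_eq_zero_of_le hk.le]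
    · intro s hs hst
      have hs' : s ≠ t' := (Finset.mem_erase.mp hs).1
      rw [if_neg (fun h => hst (Fin.ext h)), if_neg ?_]
      · ring
      · intro h
        exact hs' (Fin.ext (by omega))

/-- rotational invariance of the rectangular confluent Vandermonde matrix:
`V^↑ = V_↓ · J`, where `V^↑` is `V` without its first row, `V_↓` is `V` without its last
row, and `J = diag(J_1,…,J_n)` is the block-diagonal (Jordan-like) matrix above. -/
theorem confVandRect_rotational_invariance
    (S : ℕ) (hS : 2 ≤ S) (n : ℕ) (l : Fin n → ℕ) (hl : ∀ i, 1 ≤ l i)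
    (hSC : (∑ i, l i) ≤ S) (ξ : Fin n → ℂ) :
    dropFirstRow (confVandRect S l ξ) =
      dropLastRow (confVandRect S l ξ) * jordanLike l ξ := by
  funext k c
  have hk1 : (k : ℕ) + 1 < S := by have := k.isLt; omega
  have hk0 : (k : ℕ) < S := by omega
  trans (∑ i, ∑ t : Fin (l i), if c = encC l i t then
      ∑ s : Fin (l i), (((k : ℕ).descFactorial s : ℂ) * ξ i ^ ((k : ℕ) - (s : ℕ))) *
        (if (s : ℕ) = (t : ℕ) then ξ i
          else if (s : ℕ) + 1 = (t : ℕ) then ((t : ℕ) : ℂ) else 0) else 0)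
  · show confVandRect S l ξ ⟨(k : ℕ) + 1, hk1⟩ c = _
    unfold confVandRect
    refine Finset.sum_congr rfl fun i _ => Finset.sum_congr rfl fun t _ => ?_
    split
    · exact (key_sum (k : ℕ) (ξ i) t).symm
    · rfl
  · conv_rhs => rw [Matrix.mul_apply]
    conv_rhs => simp only [jordanLike, Finset.mul_sum, mul_ite, mul_zero, ite_and]
    conv_rhs => rw [Finset.sum_comm]
    refine Finset.sum_congr rfl fun i _ => ?_
    conv_rhs => rw [Finset.sum_comm]
    have hsplit : ∀ t : Fin (l i), (if c = encC l i t then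
        ∑ s' : Fin (l i), (((k : ℕ).descFactorial s' : ℂ) * ξ i ^ ((k : ℕ) - (s' : ℕ))) *
          (if (s' : ℕ) = (t : ℕ) then ξ i
            else if (s' : ℕ) + 1 = (t : ℕ) then ((t : ℕ) : ℂ) else 0) else 0)
        = ∑ s' : Fin (l i), if c = encC l i t then
            (((k : ℕ).descFactorial s' : ℂ) * ξ i ^ ((k : ℕ) - (s' : ℕ))) *
            (if (s' : ℕ) = (t : ℕ) then ξ i
              else if (s' : ℕ) + 1 = (t : ℕ) then ((t : ℕ) : ℂ) else 0) else 0 := by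
      intro t; split <;> simp
    simp only [hsplit]
    conv_lhs => rw [Finset.sum_comm]
    refine Finset.sum_congr rfl fun s _ => ?_
    conv_rhs => rw [Finset.sum_comm]
    refine Finset.sum_congr rfl fun t _ => ?_
    rw [Finset.sum_ite_eq' Finset.univ (encC l i s)]
    simp only [Finset.mem_univ, if_true]
    have hV : dropLastRow (confVandRect S l ξ) k (encC l i s)
        = ((k : ℕ).descFactorial s : ℂ) * ξ i ^ ((k : ℕ) - (s : ℕ)) :=
      confVandRect_apply_encC S l ξ ⟨(k : ℕ), hk0⟩ i s
    rw [hV]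
    split_ifs <;> ring
end
end
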